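/- Almost orthogonal sequences are Hilbert (Bessel) sequences: let (h_n)_{n∈ℤ} be a sequence in a Hilbert space H and φ : ℕ → ℝ₊ with |⟨h_n, h_m⟩| ≤ φ(n − m) for all n ≥ m, and ∑_{j≥0} φ(j) < ∞. Then for all scalars (α_n) with finite support, ‖∑_n α_n h_n‖² ≤ (φ(0) + 2∑_{j≥1} φ(j)) ∑_n |α_n|². -/

import Mathlib

open Finset

private lemma key_tsum (φ : ℕ → ℝ) (hφnonneg : ∀ j, 0 ≤ φ j) (hφsum : Summable φ)
    (t : Finset ℤ) :
    ∑ k ∈ t, φ k.natAbs ≤ φ 0 + 2 * ∑' j : ℕ, φ (j + 1) := by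
  have hsum1 : Summable (fun j : ℕ => φ (j + 1)) := (summable_nat_add_iff 1).mpr hφsum
  have h0 : ∑' j : ℕ, φ j = φ 0 + ∑' j : ℕ, φ (j + 1) := by
    simpa using Summable.tsum_eq_zero_add hφsum
  have hsplit : t = t.filter (fun k => 0 ≤ k) ∪ t.filter (fun k => ¬ 0 ≤ k) :=
    (Finset.filter_union_filter_not_eq (fun k => 0 ≤ k) t).symm
  rw [hsplit, Finset.sum_union (Finset.disjoint_filter_filter_not t t _)]
  · have h1 : ∑ k ∈ t.filter (fun k => 0 ≤ k), φ k.natAbs ≤ φ 0 + ∑' j : ℕ, φ (j + 1) := by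
      rw [← h0]
      have := Finset.sum_image (s := t.filter (fun k => 0 ≤ k)) (g := Int.natAbs) (f := φ)
        (by intro x hx y hy hxy; simp at hx hy; omega)
      rw [← this]
      exact Summable.sum_le_tsum _ (fun j _ => hφnonneg j) hφsum
    have h2 : ∑ k ∈ t.filter (fun k => ¬ 0 ≤ k), φ k.natAbs ≤ ∑' j : ℕ, φ (j + 1) := by
      have heq : ∑ k ∈ t.filter (fun k => ¬ 0 ≤ k), φ k.natAbs
          = ∑ j ∈ (t.filter (fun k => ¬ 0 ≤ k)).image (fun k => k.natAbs - 1), φ (j + 1) := by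
        rw [Finset.sum_image (by intro x hx y hy hxy; simp at hx hy; simp only at hxy; omega)]
        apply Finset.sum_congr rfl
        intro k hk; simp at hk
        congr 1; omega
      rw [heq]
      exact Summable.sum_le_tsum _ (fun j _ => hφnonneg _) hsum1
    linarith

/-- Almost orthogonal sequences are Bessel (Hilbert) sequences: if
`|⟨hₙ, hₘ⟩| ≤ φ(n − m)` for `n ≥ m` with `∑ⱼ φ(j) < ∞`, then for every finitely
supported scalar family,
`‖∑ αₙ hₙ‖² ≤ (φ(0) + 2 ∑_{j≥1} φ(j)) ∑ |αₙ|²`. -/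
theorem stmt17 {H : Type*} [NormedAddCommGroup H] [InnerProductSpace ℝ H]
    (h : ℤ → H) (φ : ℕ → ℝ) (hφnonneg : ∀ j, 0 ≤ φ j)
    (hφsum : Summable φ)
    (hao : ∀ n m : ℤ, m ≤ n → |(inner ℝ (h n) (h m) : ℝ)| ≤ φ (n - m).toNat)
    (α : ℤ → ℝ) (s : Finset ℤ) :
    ‖∑ n ∈ s, α n • h n‖ ^ 2 ≤
      (φ 0 + 2 * ∑' j : ℕ, φ (j + 1)) * ∑ n ∈ s, |α n| ^ 2 := by
  set C : ℝ := φ 0 + 2 * ∑' j : ℕ, φ (j + 1) with hC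
  have habs : ∀ n m : ℤ, |(inner ℝ (h n) (h m) : ℝ)| ≤ φ (n - m).natAbs := by
    intro n m
    rcases le_total m n with hmn | hmn
    · have := hao n m hmn
      have : (n - m).toNat = (n - m).natAbs := by omega
      rw [← this]; exact hao n m hmn
    · rw [real_inner_comm]
      have h1 := hao m n hmn
      have h2 : (m - n).toNat = (n - m).natAbs := by omega
      rw [h2] at h1; exact h1
  have expand : ‖∑ n ∈ s, α n • h n‖ ^ 2
      = ∑ n ∈ s, ∑ m ∈ s, (α n * α m) * (inner ℝ (h n) (h m) : ℝ) := by
    rw [← real_inner_self_eq_norm_sq, sum_inner]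
    refine Finset.sum_congr rfl fun n _ => ?_
    rw [inner_sum]
    refine Finset.sum_congr rfl fun m _ => ?_
    rw [real_inner_smul_left, real_inner_smul_right]
    ring
  have hsym : ∀ n m : ℤ, (n - m).natAbs = (m - n).natAbs := by intro n m; omega
  have B : ∀ n : ℤ, ∑ m ∈ s, φ ((n - m).natAbs) ≤ C := by
    intro n
    have hk := key_tsum φ hφnonneg hφsum (s.image (fun m => n - m))
    rwa [Finset.sum_image (by intro x _ y _ hxy; exact sub_right_injective hxy)] at hk
  calc ‖∑ n ∈ s, α n • h n‖ ^ 2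
      = ∑ n ∈ s, ∑ m ∈ s, (α n * α m) * (inner ℝ (h n) (h m) : ℝ) := expand
    _ ≤ ∑ n ∈ s, ∑ m ∈ s, |α n| * |α m| * φ ((n - m).natAbs) := by
        refine Finset.sum_le_sum fun n _ => Finset.sum_le_sum fun m _ => ?_
        calc (α n * α m) * (inner ℝ (h n) (h m) : ℝ)
            ≤ |(α n * α m) * (inner ℝ (h n) (h m) : ℝ)| := le_abs_self _
          _ = |α n| * |α m| * |(inner ℝ (h n) (h m) : ℝ)| := by rw [abs_mul, abs_mul]
          _ ≤ |α n| * |α m| * φ ((n - m).natAbs) :=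
              mul_le_mul_of_nonneg_left (habs n m) (by positivity)
    _ ≤ ∑ n ∈ s, ∑ m ∈ s, ((|α n| ^ 2 + |α m| ^ 2) / 2) * φ ((n - m).natAbs) := by
        refine Finset.sum_le_sum fun n _ => Finset.sum_le_sum fun m _ => ?_
        apply mul_le_mul_of_nonneg_right _ (hφnonneg _)
        nlinarith [sq_nonneg (|α n| - |α m|)]
    _ = ∑ n ∈ s, ∑ m ∈ s, (|α n| ^ 2 / 2 * φ ((n - m).natAbs)
          + |α m| ^ 2 / 2 * φ ((n - m).natAbs)) := by
        refine Finset.sum_congr rfl fun n _ => Finset.sum_congr rfl fun m _ => ?_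
        ring
    _ = ∑ n ∈ s, ∑ m ∈ s, |α n| ^ 2 / 2 * φ ((n - m).natAbs)
          + ∑ n ∈ s, ∑ m ∈ s, |α m| ^ 2 / 2 * φ ((n - m).natAbs) := by
        rw [← Finset.sum_add_distrib]
        exact Finset.sum_congr rfl fun n _ => Finset.sum_add_distrib
    _ = ∑ n ∈ s, ∑ m ∈ s, |α n| ^ 2 / 2 * φ ((n - m).natAbs)
          + ∑ n ∈ s, ∑ m ∈ s, |α n| ^ 2 / 2 * φ ((n - m).natAbs) := by
        congr 1
        rw [Finset.sum_comm]
        exact Finset.sum_congr rfl fun n _ => Finset.sum_congr rfl fun m _ => by rw [hsym]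
    _ = ∑ n ∈ s, |α n| ^ 2 * ∑ m ∈ s, φ ((n - m).natAbs) := by
        rw [← Finset.sum_add_distrib]
        refine Finset.sum_congr rfl fun n _ => ?_
        rw [Finset.mul_sum, ← Finset.sum_add_distrib]
        exact Finset.sum_congr rfl fun m _ => by ring
    _ ≤ ∑ n ∈ s, |α n| ^ 2 * C := by
        refine Finset.sum_le_sum fun n _ => ?_
        exact mul_le_mul_of_nonneg_left (B n) (by positivity)
    _ = C * ∑ n ∈ s, |α n| ^ 2 := by rw [← Finset.sum_mul, mul_comm]
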